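/- arXiv:2002.02472 — 2 statements merged into one kernel-verified Lean document; each statement's English description precedes it below -/
import Mathlib

section
/- Let G be a group acting by automorphisms on a connected simple graph X. Suppose the action is transitive on the vertices of X and transitive on the edges of X. Let e be an edge of X connecting vertices v and w, and let h ∈ G be an element satisfying h·w = v. Then G is generated by the vertex stabilizer G_v together with h; that is, G = ⟨G_v, h⟩. -/
/-- Let `G` be a group acting by graph automorphisms on a connected simple
graph `X`, transitively on vertices and transitively on (unordered) edges. If `e` is an edge
connecting vertices `v` and `w`, and `h ∈ G` satisfies `h • w = v`, then `G` is generated by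
the vertex stabilizer `G_v` together with `h`. -/
theorem stabilizer_and_edge_element_generate
    {V G : Type*} [Group G] [MulAction G V] (X : SimpleGraph V)
    (hadj : ∀ (g : G) (a b : V), X.Adj a b → X.Adj (g • a) (g • b))
    (hconn : X.Connected)
    (hvert : ∀ a b : V, ∃ g : G, g • a = b)
    (hedge : ∀ a b c d : V, X.Adj a b → X.Adj c d →
      ∃ g : G, (g • a = c ∧ g • b = d) ∨ (g • a = d ∧ g • b = c))
    (v w : V) (he : X.Adj v w) (h : G) (hh : h • w = v) :
    Subgroup.closure ((MulAction.stabilizer G v : Set G) ∪ {h}) = ⊤ := by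
  set H := Subgroup.closure ((MulAction.stabilizer G v : Set G) ∪ {h}) with hHdef
  have hhH : h ∈ H := Subgroup.subset_closure (Or.inr rfl)
  have hstab : ∀ g : G, g • v = v → g ∈ H := fun g hg =>
    Subgroup.subset_closure (Or.inl hg)
  have key : ∀ (u x : V) (p : X.Walk u x), x = v → ∃ k ∈ H, k • v = u := by
    intro u x p
    induction p with
    | nil => rintro rfl; exact ⟨1, H.one_mem, one_smul _ _⟩
    | @cons a b c hab p ih =>
      intro hx
      obtain ⟨k, hk, hkv⟩ := ih hx
      have hadj' : X.Adj v (k⁻¹ • a) := by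
        have := hadj k⁻¹ b a hab.symm
        rwa [← hkv, inv_smul_smul] at this
      obtain ⟨g, hg⟩ := hedge v (k⁻¹ • a) v w hadj' he
      rcases hg with ⟨hg1, hg2⟩ | ⟨hg1, hg2⟩
      · refine ⟨k * g⁻¹ * h⁻¹, ?_, ?_⟩
        · exact H.mul_mem (H.mul_mem hk (H.inv_mem (hstab g hg1))) (H.inv_mem hhH)
        · have hw : h⁻¹ • v = w := by rw [← hh, inv_smul_smul]
          rw [mul_smul, mul_smul, hw, ← hg2, inv_smul_smul, smul_inv_smul]
      · have hgH : g ∈ H := by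
          have : h * g ∈ H := hstab (h * g) (by rw [mul_smul, hg1, hh])
          have := H.mul_mem (H.inv_mem hhH) this
          rwa [inv_mul_cancel_left] at this
        refine ⟨k * g⁻¹, H.mul_mem hk (H.inv_mem hgH), ?_⟩
        rw [mul_smul, ← hg2, inv_smul_smul, smul_inv_smul]
  rw [eq_top_iff]
  intro g _
  obtain ⟨p⟩ := hconn.preconnected (g • v) v
  obtain ⟨k, hk, hkv⟩ := key (g • v) v p rfl
  have : k⁻¹ * g ∈ H := hstab _ (by rw [mul_smul, ← hkv, inv_smul_smul])
  have := H.mul_mem hk this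
  rwa [mul_inv_cancel_left] at this
end

section
/- Let κ_1, …, κ_n be positive integers whose sum is even, write the even ones as η_1, …, η_p and the odd ones as υ_1, …, υ_q (so p + q = n), and set k_i = κ_i + 1 for each i. Let PR = ∏_{i=1}^n ℤ/(κ_i+1)ℤ and let PR′ be the parity-kernel subgroup as defined. Then PR′ equals the cyclic subgroup generated by the all-ones element (1, 1, …, 1) if and only if q ≤ 2 and the integers η_1 + 1, …, η_p + 1, (υ_1 + 1)/2, …, (υ_q + 1)/2 are pairwise coprime. -/
/-- The "parity" homomorphism `σ : PR → ℤ/2ℤ` on the prong rotation group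
`PR = ∏ i, ℤ/k_iℤ`, sending `c` to the sum, over the indices `i` with `k_i` even, of the
mod-2 reductions of the coordinates `c i`. Its kernel is the subgroup `PR′`. -/
noncomputable def parityHom {n : ℕ} (k : Fin n → ℕ) : (∀ i, ZMod (k i)) →+ ZMod 2 :=
  ∑ i : Fin n,
    if h : 2 ∣ k i then
      ((ZMod.castHom h (ZMod 2)).toAddMonoidHom.comp
        (Pi.evalAddMonoidHom (fun i => ZMod (k i)) i))
    else 0

private lemma pi_one_addOrderOf {n : ℕ} (k : Fin n → ℕ) [∀ i, NeZero (k i)] :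
    addOrderOf (1 : ∀ i, ZMod (k i)) = Finset.univ.lcm k := by
  refine Nat.dvd_antisymm ?_ ?_
  · apply addOrderOf_dvd_of_nsmul_eq_zero
    funext i
    have h1 : addOrderOf (1 : ZMod (k i)) ∣ Finset.univ.lcm k := by
      rw [ZMod.addOrderOf_one]; exact Finset.dvd_lcm (Finset.mem_univ i)
    have h2 := addOrderOf_dvd_iff_nsmul_eq_zero.mp h1
    simpa using h2
  · apply Finset.lcm_dvd
    intro i _
    have h0 : (addOrderOf (1 : ∀ i, ZMod (k i))) • (1 : ∀ i, ZMod (k i)) = 0 :=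
      addOrderOf_nsmul_eq_zero 1
    have h1 := congrFun h0 i
    simp only [Pi.smul_apply, Pi.one_apply, Pi.zero_apply] at h1
    rw [← ZMod.addOrderOf_one (k i)]
    exact addOrderOf_dvd_of_nsmul_eq_zero h1

private lemma parityHom_apply {n : ℕ} (k : Fin n → ℕ) (c : ∀ i, ZMod (k i)) :
    parityHom k c = ∑ i, if h : 2 ∣ k i then ((ZMod.castHom h (ZMod 2)) (c i)) else 0 := by
  rw [parityHom, AddMonoidHom.finset_sum_apply]
  refine Finset.sum_congr rfl fun i _ => ?_
  rw [apply_dite (fun φ : (∀ i, ZMod (k i)) →+ ZMod 2 => φ c)]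
  rfl

private lemma nat_prod_dvd {ι : Type*} (s : Finset ι) (f : ι → ℕ) (L : ℕ)
    (hcop : ∀ i ∈ s, ∀ j ∈ s, i ≠ j → Nat.Coprime (f i) (f j))
    (hdvd : ∀ i ∈ s, f i ∣ L) : (∏ i ∈ s, f i) ∣ L := by
  classical
  induction s using Finset.induction_on with
  | empty => simp
  | @insert a s ha ih =>
    rw [Finset.prod_insert ha]
    have hc : Nat.Coprime (f a) (∏ i ∈ s, f i) :=
      Nat.Coprime.prod_right fun i hi =>
        hcop a (Finset.mem_insert_self a s) i (Finset.mem_insert_of_mem hi)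
          (fun h => ha (h ▸ hi))
    exact hc.mul_dvd_of_dvd_of_dvd (hdvd a (Finset.mem_insert_self a s))
      (ih (fun i hi j hj hij => hcop i (Finset.mem_insert_of_mem hi) j
        (Finset.mem_insert_of_mem hj) hij)
        (fun i hi => hdvd i (Finset.mem_insert_of_mem hi)))

private lemma subA1 {ι : Type*} [Fintype ι] (k k' : ι → ℕ) (hdvd : ∀ m, k m ∣ 2 * k' m) :
    Finset.univ.lcm k ∣ 2 * ∏ m, k' m := by
  refine Finset.lcm_dvd fun m _ => (hdvd m).trans ?_
  exact Nat.mul_dvd_mul_left 2 (Finset.dvd_prod_of_mem k' (Finset.mem_univ m))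

private lemma subA2 {ι : Type*} [Fintype ι] [DecidableEq ι] (k k' : ι → ℕ)
    (hdvd : ∀ m, k m ∣ 2 * k' m) (g : ℕ) (i j : ι) (hij : i ≠ j)
    (hgi : g ∣ k' i) (hgj : g ∣ k' j) :
    ∃ t, g * t = ∏ m, k' m ∧ Finset.univ.lcm k ∣ 2 * t := by
  classical
  obtain ⟨a, ha⟩ := hgi
  obtain ⟨b, hb⟩ := hgj
  set R := ∏ m ∈ (Finset.univ.erase i).erase j, k' m with hR
  have hsplit : ∏ m, k' m = k' i * (k' j * R) := by
    rw [← Finset.mul_prod_erase Finset.univ k' (Finset.mem_univ i),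
      ← Finset.mul_prod_erase _ k'
        (Finset.mem_erase.mpr ⟨(Ne.symm hij), Finset.mem_univ j⟩)]
  refine ⟨a * (k' j * R), by rw [← mul_assoc, ← ha, hsplit], ?_⟩
  refine Finset.lcm_dvd fun m _ => (hdvd m).trans (Nat.mul_dvd_mul_left 2 ?_)
  by_cases hmi : m = i
  · subst hmi
    have h1 : k' m ∣ a * k' j := ⟨b, by rw [ha, hb]; ring⟩
    exact h1.trans ⟨R, by ring⟩
  · by_cases hmj : m = j
    · subst hmj; exact ⟨a * R, by ring⟩
    · have h1 : k' m ∣ R :=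
        Finset.dvd_prod_of_mem k' (by simp [hR, Finset.mem_erase, hmi, hmj])
      exact h1.trans ⟨a * k' j, by ring⟩

private lemma subB {ι : Type*} [Fintype ι] [DecidableEq ι] (k k' : ι → ℕ) (E : Finset ι)
    (hkE : ∀ i ∈ E, k i = 2 * k' i) (hkO : ∀ i ∉ E, k i = k' i) :
    ∏ i, k i = 2 ^ E.card * ∏ i, k' i := by
  have h : ∀ i, k i = (if i ∈ E then 2 else 1) * k' i := by
    intro i
    by_cases h : i ∈ E
    · simp [h, hkE i h]
    · simp [h, hkO i h]
  rw [Finset.prod_congr rfl (fun i _ => h i), Finset.prod_mul_distrib,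
    Finset.prod_ite_mem, Finset.univ_inter, Finset.prod_const]

private lemma subC {ι : Type*} [Fintype ι] (k : ι → ℕ)
    (hcop : ∀ i j : ι, i ≠ j → Nat.Coprime (k i) (k j)) :
    Finset.univ.lcm k = ∏ i, k i :=
  Nat.dvd_antisymm
    (Finset.lcm_dvd fun m _ => Finset.dvd_prod_of_mem k (Finset.mem_univ m))
    (nat_prod_dvd _ _ _ (fun i _ j _ h => hcop i j h)
      (fun i _ => Finset.dvd_lcm (Finset.mem_univ i)))

private lemma subD {ι : Type*} [Fintype ι] [DecidableEq ι] (k k' : ι → ℕ) (a : ι)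
    (hodd : ∀ m, m ≠ a → Odd (k' m))
    (hcop : ∀ i j : ι, i ≠ j → Nat.Coprime (k' i) (k' j))
    (hka : k a = 2 * k' a) (hk'dvd : ∀ m, k' m ∣ k m) :
    2 * ∏ m, k' m ∣ Finset.univ.lcm k := by
  have h1 : 2 * k' a ∣ Finset.univ.lcm k := hka ▸ Finset.dvd_lcm (Finset.mem_univ a)
  have h2 : (∏ m ∈ Finset.univ.erase a, k' m) ∣ Finset.univ.lcm k :=
    nat_prod_dvd _ _ _ (fun i _ j _ h => hcop i j h)
      (fun i _ => (hk'dvd i).trans (Finset.dvd_lcm (Finset.mem_univ i)))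
  have hc : Nat.Coprime (2 * k' a) (∏ m ∈ Finset.univ.erase a, k' m) := by
    refine Nat.Coprime.mul ?_ (Nat.Coprime.prod_right fun m hm =>
      hcop a m (fun h => (Finset.mem_erase.mp hm).1 h.symm))
    exact Nat.Coprime.prod_right fun m hm =>
      (hodd m (Finset.mem_erase.mp hm).1).coprime_two_left
  have h3 := hc.mul_dvd_of_dvd_of_dvd h1 h2
  rwa [mul_assoc, Finset.mul_prod_erase Finset.univ k' (Finset.mem_univ a)] at h3

private lemma main_arith0 {n : ℕ} (k : Fin n → ℕ) (hodd : ∀ i, Odd (k i)) :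
    (∏ i, k i = Finset.univ.lcm k) ↔
      ∀ i j : Fin n, i ≠ j → Nat.Coprime (k i) (k j) := by
  constructor
  · intro H i j hij
    obtain ⟨t, hgt, hLt⟩ := subA2 k k (fun m => dvd_mul_left (k m) 2)
      (Nat.gcd (k i) (k j)) i j hij (Nat.gcd_dvd_left _ _) (Nat.gcd_dvd_right _ _)
    have hP : 0 < ∏ m, k m := Finset.prod_pos fun m _ => (hodd m).pos
    have htpos : 0 < t := by
      rcases Nat.eq_zero_or_pos t with h | h
      · subst h; rw [mul_zero] at hgt; omega
      · exact h
    have hd : t * Nat.gcd (k i) (k j) ∣ t * 2 := by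
      rw [mul_comm t _, mul_comm t 2, hgt, H]; exact hLt
    have hg2 : Nat.gcd (k i) (k j) ∣ 2 := (mul_dvd_mul_iff_left htpos.ne').mp hd
    have : Nat.gcd (k i) (k j) ∣ 1 := by
      have h1 : Nat.Coprime 2 (k i) := (hodd i).coprime_two_left
      have := Nat.dvd_gcd hg2 (Nat.gcd_dvd_left (k i) (k j))
      rwa [h1.gcd_eq_one] at this
    exact Nat.dvd_one.mp this
  · intro hcop
    exact (subC k hcop).symm

private lemma main_arith {n : ℕ} (k k' : Fin n → ℕ) (E : Finset (Fin n))
    (hk'pos : ∀ i, 0 < k' i)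
    (hkE : ∀ i ∈ E, k i = 2 * k' i)
    (hkO : ∀ i ∉ E, k i = k' i)
    (hkOddO : ∀ i ∉ E, Odd (k' i))
    (hq : Even E.card) (hE0 : E.card ≠ 0) :
    (∏ i, k i = 2 * Finset.univ.lcm k) ↔
      (E.card ≤ 2 ∧ ∀ i j : Fin n, i ≠ j → Nat.Coprime (k' i) (k' j)) := by
  classical
  have hdvd2 : ∀ m, k m ∣ 2 * k' m := fun m => by
    by_cases h : m ∈ E
    · rw [hkE m h]
    · rw [hkO m h]; exact dvd_mul_left (k' m) 2
  have hk'dvd : ∀ m, k' m ∣ k m := fun m => by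
    by_cases h : m ∈ E
    · rw [hkE m h]; exact dvd_mul_left (k' m) 2
    · rw [hkO m h]
  have hP'pos : 0 < ∏ i, k' i := Finset.prod_pos fun i _ => hk'pos i
  have hprod : ∏ i, k i = 2 ^ E.card * ∏ i, k' i := subB k k' E hkE hkO
  constructor
  · intro H
    have hq2 : E.card ≤ 2 := by
      have h1 : Finset.univ.lcm k ∣ 2 * ∏ i, k' i := subA1 k k' hdvd2
      have h2 : 2 ^ E.card * ∏ i, k' i ∣ 2 ^ 2 * ∏ i, k' i := by
        rw [← hprod, H]
        calc 2 * Finset.univ.lcm k ∣ 2 * (2 * ∏ i, k' i) := mul_dvd_mul_left 2 h1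
          _ = 2 ^ 2 * ∏ i, k' i := by ring
      have h3 := (Nat.mul_dvd_mul_iff_right hP'pos).mp h2
      exact (Nat.pow_dvd_pow_iff_le_right one_lt_two).mp h3
    refine ⟨hq2, fun i j hij => ?_⟩
    have hqe : E.card = 2 := by
      obtain ⟨r, hr⟩ := hq; omega
    obtain ⟨t, hgt, hLt⟩ := subA2 k k' hdvd2 (Nat.gcd (k' i) (k' j)) i j hij
      (Nat.gcd_dvd_left _ _) (Nat.gcd_dvd_right _ _)
    have htpos : 0 < t := by
      rcases Nat.eq_zero_or_pos t with h | h
      · subst h; rw [mul_zero] at hgt; omega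
      · exact h
    have hd : t * Nat.gcd (k' i) (k' j) ∣ t * 1 := by
      have h4 : 2 ^ 2 * (Nat.gcd (k' i) (k' j) * t) ∣ 2 ^ 2 * t := by
        rw [hgt, show (2:ℕ) ^ 2 * ∏ m, k' m = ∏ i, k i from by rw [hprod, hqe], H]
        calc 2 * Finset.univ.lcm k ∣ 2 * (2 * t) := mul_dvd_mul_left 2 hLt
          _ = 2 ^ 2 * t := by ring
      have h5 := (mul_dvd_mul_iff_left (by norm_num : (2:ℕ)^2 ≠ 0)).mp h4
      rw [mul_comm _ t] at h5
      simpa using h5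
    have hg1 := (mul_dvd_mul_iff_left htpos.ne').mp hd
    exact Nat.dvd_one.mp hg1
  · rintro ⟨hq2, hcop⟩
    have hqe : E.card = 2 := by obtain ⟨r, hr⟩ := hq; omega
    obtain ⟨a, b, hab, hEab⟩ := Finset.card_eq_two.mp hqe
    have main : ∀ c ∈ E, (∀ m, m ≠ c → Odd (k' m)) →
        ∏ i, k i = 2 * Finset.univ.lcm k := by
      intro c hc hoddc
      have h1 : 2 * ∏ i, k' i ∣ Finset.univ.lcm k :=
        subD k k' c hoddc hcop (hkE c hc) hk'dvd
      have h2 := subA1 k k' hdvd2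
      have h3 : Finset.univ.lcm k = 2 * ∏ i, k' i := Nat.dvd_antisymm h2 h1
      rw [hprod, hqe, h3]; ring
    have hmemE : ∀ m, m ∈ E ↔ (m = a ∨ m = b) := by
      intro m; rw [hEab]; simp
    by_cases hb : Odd (k' b)
    · refine main a ((hmemE a).mpr (Or.inl rfl)) fun m hm => ?_
      by_cases hmE : m ∈ E
      · rcases (hmemE m).mp hmE with h | h
        · exact absurd h hm
        · exact h ▸ hb
      · exact hkOddO m hmE
    · have ha : Odd (k' a) := by
        by_contra hae
        have h2a : 2 ∣ k' a := (Nat.not_odd_iff_even.mp hae).two_dvd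
        have h2b : 2 ∣ k' b := (Nat.not_odd_iff_even.mp hb).two_dvd
        have := Nat.dvd_gcd h2a h2b
        rw [(hcop a b hab).gcd_eq_one] at this
        omega
      refine main b ((hmemE b).mpr (Or.inr rfl)) fun m hm => ?_
      by_cases hmE : m ∈ E
      · rcases (hmemE m).mp hmE with h | h
        · exact h ▸ ha
        · exact absurd h hm
      · exact hkOddO m hmE

/-- Let `κ_1, …, κ_n` be positive integers with even sum, `k_i = κ_i + 1`,
`PR = ∏ i, ℤ/(κ_i+1)ℤ`, and `PR′` the parity-kernel subgroup. Then `PR′` equals the cyclic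
subgroup generated by the all-ones element iff the number `q` of odd `κ_i` satisfies `q ≤ 2`
and the integers `η_i + 1` (for the even entries `η_i`) and `(υ_j + 1)/2` (for the odd
entries `υ_j`) are pairwise coprime. -/
theorem parityKernel_eq_zmultiples_one_iff
    {n : ℕ} (κ : Fin n → ℕ) (hpos : ∀ i, 0 < κ i) (hsum : Even (∑ i, κ i)) :
    (parityHom (fun i => κ i + 1)).ker
        = AddSubgroup.zmultiples (1 : ∀ i, ZMod (κ i + 1)) ↔
      ((Finset.univ.filter fun i => Odd (κ i)).card ≤ 2 ∧
        ∀ i j, i ≠ j →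
          Nat.Coprime (if Even (κ i) then κ i + 1 else (κ i + 1) / 2)
            (if Even (κ j) then κ j + 1 else (κ j + 1) / 2)) := by
  classical
  haveI : ∀ i, NeZero (κ i + 1) := fun i => ⟨(κ i).succ_ne_zero⟩
  have h2dvd : ∀ i, Odd (κ i) ↔ 2 ∣ (κ i + 1) := fun i => by rw [Nat.odd_iff]; omega
  have happly : ∀ c : ∀ i, ZMod (κ i + 1), parityHom (fun i => κ i + 1) c
      = ∑ i, if h : 2 ∣ (κ i + 1) then ((ZMod.castHom h (ZMod 2)) (c i)) else 0 :=
    fun c => parityHom_apply _ c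
  have hq : Even (Finset.univ.filter fun i => Odd (κ i)).card :=
    (Finset.even_sum_iff_even_card_odd κ).mp hsum
  -- 1 is in the kernel
  have hone : parityHom (fun i => κ i + 1) 1 = 0 := by
    rw [happly]
    have hterm : ∀ i : Fin n,
        (if h : 2 ∣ (κ i + 1) then
            ((ZMod.castHom h (ZMod 2)) ((1 : ∀ i, ZMod (κ i + 1)) i)) else 0)
          = if 2 ∣ (κ i + 1) then (1 : ZMod 2) else 0 := by
      intro i
      by_cases h : 2 ∣ (κ i + 1)
      · rw [dif_pos h, if_pos h, Pi.one_apply, map_one]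
      · rw [dif_neg h, if_neg h]
    rw [Finset.sum_congr rfl fun i _ => hterm i, Finset.sum_boole]
    have hfilt : (Finset.univ.filter fun i => 2 ∣ (κ i + 1))
        = (Finset.univ.filter fun i => Odd (κ i)) :=
      (Finset.filter_congr fun i _ => (h2dvd i).symm)
    rw [hfilt, ZMod.natCast_eq_zero_iff]
    exact hq.two_dvd
  have hle : AddSubgroup.zmultiples (1 : ∀ i, ZMod (κ i + 1))
      ≤ (parityHom (fun i => κ i + 1)).ker :=
    AddSubgroup.zmultiples_le.mpr (AddMonoidHom.mem_ker.mpr hone)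
  have hcardz : Nat.card (AddSubgroup.zmultiples (1 : ∀ i, ZMod (κ i + 1)))
      = Finset.univ.lcm (fun i => κ i + 1) := by
    rw [Nat.card_zmultiples, pi_one_addOrderOf]
  have hcardPR : Nat.card (∀ i, ZMod (κ i + 1)) = ∏ i, (κ i + 1) := by
    rw [Nat.card_pi]
    exact Finset.prod_congr rfl fun i _ => Nat.card_zmod _
  have key : ((parityHom (fun i => κ i + 1)).ker
        = AddSubgroup.zmultiples (1 : ∀ i, ZMod (κ i + 1)))
      ↔ Nat.card (parityHom (fun i => κ i + 1)).ker
          = Finset.univ.lcm (fun i => κ i + 1) := by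
    constructor
    · intro h; rw [h, hcardz]
    · intro h
      exact (AddSubgroup.eq_of_le_of_card_ge hle (le_of_eq (h.trans hcardz.symm))).symm
  have hindex : Nat.card (parityHom (fun i => κ i + 1)).ker
      * Nat.card (parityHom (fun i => κ i + 1)).range = ∏ i, (κ i + 1) := by
    have h := AddSubgroup.card_mul_index (parityHom (fun i => κ i + 1)).ker
    rw [AddSubgroup.index_ker] at h
    rw [h, hcardPR]
  rw [key]
  by_cases hq0 : (Finset.univ.filter fun i => Odd (κ i)).card = 0
  · -- all κ i even
    have hEall : ∀ i, Even (κ i) := by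
      intro i
      by_contra h
      have hi : i ∈ (Finset.univ.filter fun i => Odd (κ i)) :=
        Finset.mem_filter.mpr ⟨Finset.mem_univ i, Nat.not_even_iff_odd.mp h⟩
      rw [Finset.card_eq_zero.mp hq0] at hi
      exact absurd hi (Finset.notMem_empty i)
    have hkodd : ∀ i, Odd (κ i + 1) := fun i => (hEall i).add_one
    have hker : (parityHom (fun i => κ i + 1)).ker = ⊤ := by
      rw [AddSubgroup.eq_top_iff']
      intro x
      rw [AddMonoidHom.mem_ker, happly]
      refine Finset.sum_eq_zero fun i _ => ?_
      rw [dif_neg]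
      intro h
      exact (Nat.not_even_iff_odd.mpr (hkodd i)) (even_iff_two_dvd.mpr h)
    have hcardker : Nat.card (parityHom (fun i => κ i + 1)).ker = ∏ i, (κ i + 1) := by
      rw [hker, AddSubgroup.card_top, hcardPR]
    rw [hcardker]
    rw [show (∏ i, (κ i + 1) = Finset.univ.lcm (fun i => κ i + 1))
        ↔ ∀ i j : Fin n, i ≠ j → Nat.Coprime (κ i + 1) (κ j + 1) from
      main_arith0 (fun i => κ i + 1) hkodd]
    constructor
    · intro h
      refine ⟨by omega, fun i j hij => ?_⟩
      rw [if_pos (hEall i), if_pos (hEall j)]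
      exact h i j hij
    · rintro ⟨-, h⟩ i j hij
      have := h i j hij
      rwa [if_pos (hEall i), if_pos (hEall j)] at this
  · -- at least one κ i odd
    obtain ⟨i0, hi0⟩ := Finset.card_pos.mp (Nat.pos_of_ne_zero hq0)
    have hodd0 : Odd (κ i0) := (Finset.mem_filter.mp hi0).2
    have hsurj_elt : parityHom (fun i => κ i + 1)
        (Pi.single i0 (1 : ZMod (κ i0 + 1))) = 1 := by
      rw [happly, Finset.sum_eq_single i0]
      · rw [dif_pos ((h2dvd i0).mp hodd0), Pi.single_eq_same, map_one]
      · intro b _ hb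
        split
        · rw [Pi.single_eq_of_ne hb, map_zero]
        · rfl
      · intro h; exact absurd (Finset.mem_univ i0) h
    have hrange : (parityHom (fun i => κ i + 1)).range = ⊤ := by
      rw [AddSubgroup.eq_top_iff']
      intro x
      have hx : x = 0 ∨ x = 1 := by revert x; decide
      rcases hx with rfl | rfl
      · exact zero_mem _
      · exact ⟨_, hsurj_elt⟩
    have h2card : Nat.card (parityHom (fun i => κ i + 1)).ker * 2 = ∏ i, (κ i + 1) := by
      rw [← hindex, hrange, AddSubgroup.card_top, Nat.card_zmod]
    have hiff2 : (Nat.card (parityHom (fun i => κ i + 1)).ker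
          = Finset.univ.lcm (fun i => κ i + 1))
        ↔ ∏ i, (κ i + 1) = 2 * Finset.univ.lcm (fun i => κ i + 1) := by
      constructor
      · intro h; rw [← h2card, h]; ring
      · intro h; omega
    rw [hiff2]
    have hk'pos : ∀ i : Fin n, 0 < (if Even (κ i) then κ i + 1 else (κ i + 1) / 2) := by
      intro i; split
      · omega
      · exact Nat.div_pos (by have := hpos i; omega) (by norm_num)
    refine main_arith (fun i => κ i + 1)
      (fun i => if Even (κ i) then κ i + 1 else (κ i + 1) / 2)
      (Finset.univ.filter fun i => Odd (κ i)) hk'pos ?_ ?_ ?_ hq hq0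
    · intro i hi
      have hoddi : Odd (κ i) := (Finset.mem_filter.mp hi).2
      simp only [if_neg (Nat.not_even_iff_odd.mpr hoddi)]
      exact (Nat.mul_div_cancel' ((h2dvd i).mp hoddi)).symm
    · intro i hi
      have hevi : Even (κ i) := by
        by_contra h
        exact hi (Finset.mem_filter.mpr ⟨Finset.mem_univ i, Nat.not_even_iff_odd.mp h⟩)
      simp only [if_pos hevi]
    · intro i hi
      have hevi : Even (κ i) := by
        by_contra h
        exact hi (Finset.mem_filter.mpr ⟨Finset.mem_univ i, Nat.not_even_iff_odd.mp h⟩)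
      simp only [if_pos hevi]
      exact hevi.add_one
end
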